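/- arXiv:2003.05053 — 5 statements merged into one kernel-verified Lean document; each statement's English description precedes it below -/
import Mathlib

section
/- Let M_h, M_v ≥ 1 be natural numbers, M = 2 M_h M_v, let ρ_vv, ρ_vh ∈ ℂ with (ρ_vv, ρ_vh) ≠ (0,0), b = (|ρ_vv|² + |ρ_vh|²)^{−1/2}, and let R ∈ ℂ^{M×M} be unitary. For every unit-norm vector c ∈ ℂ^M, the integral over (ψ_az, ψ_el) ∈ [−π,π] × [−π,π] of the reference gain g(ψ_az, ψ_el, c) = | b ([ρ_vv, ρ_vh] ⊗ (d_{M_h}(ψ_az) ⊗ d_{M_v}(ψ_el))^H) R c |² satisfies ∫∫ g dψ_az dψ_el ≤ (2π)²/(M_h M_v), and equality holds exactly when R c is a linear combination of the vectors [ρ_vv* e_ℓᵀ, ρ_vh* e_ℓᵀ]ᵀ ∈ ℂ^M, ℓ = 1, …, M/2, where e_ℓ is the ℓ-th standard basis vector of ℂ^{M/2}. -/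
/-!
Write `v = R c` and `w_k = ρ_vv v_{0,k} + ρ_vh v_{1,k}` for `k ∈ Fin M_h × Fin M_v`; the gain is
`b² |∑_k w_k conj (d_{M_h}(ψ_az)_{k₁} d_{M_v}(ψ_el)_{k₂})|²`. The entries of `d_M(ψ)` are
orthogonal on `[-π, π]`, so Parseval for trigonometric polynomials, applied once in each variable,
evaluates the double integral as `(2π)²/(M_h M_v) · b² ∑_k |w_k|²`. Lagrange's identity
`|p x + q y|² + |q̄ x - p̄ y|² = (|p|² + |q|²)(|x|² + |y|²)`, summed over `k` and combined with
`‖v‖ = ‖c‖ = 1`, gives `∑_k |w_k|² ≤ |ρ_vv|² + |ρ_vh|² = b⁻²`, with equality iff every pair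
`(v_{0,k}, v_{1,k})` is proportional to `(ρ̄_vv, ρ̄_vh)`.
-/

open Complex Matrix MeasureTheory

noncomputable def arv (M : ℕ) (ψ : ℝ) : Fin M → ℂ :=
  fun i => ((1 / Real.sqrt M : ℝ) : ℂ) * Complex.exp (Complex.I * (ψ : ℂ) * ((i : ℕ) : ℂ))

open scoped ComplexConjugate

theorem integral_exp_int_mul_I (n : ℤ) :
    ∫ ψ in -Real.pi..Real.pi, exp (n * I * ψ) = if n = 0 then (2 * Real.pi : ℂ) else 0 := by
  split_ifs with hn
  · simp [hn]; ring
  · have hnI : (n : ℂ) * I ≠ 0 := by simp [hn, I_ne_zero]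
    have hper : exp (n * I * Real.pi) = exp (n * I * (-Real.pi : ℝ)) := by
      rw [← mul_one (exp (_ * (-Real.pi : ℝ))), ← exp_int_mul_two_pi_mul_I n, ← Complex.exp_add]
      push_cast
      ring_nf
    rw [integral_exp_mul_complex hnI, hper, sub_self, zero_div]

theorem conj_arv_mul_arv (M : ℕ) (ψ : ℝ) (i j : Fin M) :
    conj (arv M ψ i) * arv M ψ j = (M : ℂ)⁻¹ * exp ((j - i : ℤ) * I * ψ) := by
  have hM : ((1 / Real.sqrt M : ℝ) : ℂ) * ((1 / Real.sqrt M : ℝ) : ℂ) = (M : ℂ)⁻¹ := by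
    rw [← ofReal_mul, one_div_mul_one_div, Real.mul_self_sqrt (Nat.cast_nonneg M)]
    push_cast
    ring
  simp only [arv, map_mul, ← Complex.exp_conj, conj_ofReal, conj_I, map_natCast]
  rw [mul_mul_mul_comm, hM, ← Complex.exp_add]
  push_cast
  ring_nf

@[fun_prop]
theorem continuous_arv (M : ℕ) (i : Fin M) : Continuous fun ψ => arv M ψ i := by
  unfold arv
  fun_prop

theorem integral_conj_arv_mul_arv (M : ℕ) (i j : Fin M) :
    ∫ ψ in -Real.pi..Real.pi, conj (arv M ψ i) * arv M ψ j
      = if i = j then (2 * Real.pi / M : ℂ) else 0 := by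
  simp_rw [conj_arv_mul_arv, intervalIntegral.integral_const_mul, integral_exp_int_mul_I,
    sub_eq_zero, Nat.cast_inj, Fin.val_inj, eq_comm (a := j)]
  split_ifs <;> ring

theorem ofReal_norm_sq_sum_mul_conj_arv (M : ℕ) (a : Fin M → ℂ) (ψ : ℝ) :
    ((‖∑ i, a i * conj (arv M ψ i)‖ ^ 2 : ℝ) : ℂ)
      = ∑ i, ∑ j, conj (a i) * a j * (conj (arv M ψ j) * arv M ψ i) := by
  rw [ofReal_pow, ← conj_mul', map_sum, Finset.sum_mul_sum]
  refine Finset.sum_congr rfl fun i _ => Finset.sum_congr rfl fun j _ => ?_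
  simp only [map_mul, conj_conj]
  ring

theorem integral_norm_sq_sum_mul_conj_arv (M : ℕ) (a : Fin M → ℂ) :
    ∫ ψ in -Real.pi..Real.pi, ‖∑ i, a i * conj (arv M ψ i)‖ ^ 2
      = 2 * Real.pi / M * ∑ i, ‖a i‖ ^ 2 := by
  have hcont : ∀ i j, Continuous fun ψ => conj (a i) * a j * (conj (arv M ψ j) * arv M ψ i) :=
    fun i j => by fun_prop
  apply ofReal_injective
  rw [← intervalIntegral.integral_ofReal]
  simp_rw [ofReal_norm_sq_sum_mul_conj_arv]
  rw [intervalIntegral.integral_finsetSum fun i _ =>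
    (continuous_finsetSum _ fun j _ => hcont i j).intervalIntegrable _ _]
  simp_rw [intervalIntegral.integral_finsetSum fun j _ => (hcont _ j).intervalIntegrable _ _,
    intervalIntegral.integral_const_mul, integral_conj_arv_mul_arv, mul_ite, mul_zero,
    Finset.sum_ite_eq', Finset.mem_univ, if_true]
  push_cast
  rw [Finset.mul_sum]
  refine Finset.sum_congr rfl fun i _ => ?_
  rw [← conj_mul']
  ring

theorem integral_integral_norm_sq_sum_mul_conj_arv_mul_arv (m n : ℕ) (w : Fin m × Fin n → ℂ) :
    ∫ x in -Real.pi..Real.pi, ∫ y in -Real.pi..Real.pi,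
        ‖∑ k, w k * conj (arv m x k.1 * arv n y k.2)‖ ^ 2
      = (2 * Real.pi) ^ 2 / (m * n) * ∑ k, ‖w k‖ ^ 2 := by
  have hsplit : ∀ x y, ∑ k, w k * conj (arv m x k.1 * arv n y k.2)
      = ∑ l, (∑ k, w (k, l) * conj (arv m x k)) * conj (arv n y l) := by
    intro x y
    rw [Fintype.sum_prod_type, Finset.sum_comm]
    simp_rw [Finset.sum_mul, map_mul, mul_assoc]
  simp_rw [hsplit, integral_norm_sq_sum_mul_conj_arv]
  rw [intervalIntegral.integral_const_mul, intervalIntegral.integral_finsetSum fun l _ =>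
    (by fun_prop : Continuous fun x => ‖∑ k, w (k, l) * conj (arv m x k)‖ ^ 2).intervalIntegrable
      _ _]
  simp_rw [integral_norm_sq_sum_mul_conj_arv, Fintype.sum_prod_type_right, Finset.mul_sum]
  refine Finset.sum_congr rfl fun l _ => Finset.sum_congr rfl fun k _ => ?_
  ring

theorem sum_fin_two_prod_ite_mul_conj_mul {ι : Type*} [Fintype ι] (p q : ℂ) (a : ι → ℂ)
    (v : Fin 2 × ι → ℂ) :
    ∑ pk : Fin 2 × ι, (if pk.1 = 0 then p else q) * conj (a pk.2) * v pk
      = ∑ k, (p * v (0, k) + q * v (1, k)) * conj (a k) := by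
  rw [Fintype.sum_prod_type, Fin.sum_univ_two, ← Finset.sum_add_distrib]
  refine Finset.sum_congr rfl fun k _ => ?_
  simp only [Fin.isValue, if_true, one_ne_zero, if_false]
  ring

theorem norm_sq_mul_add_mul_add_norm_sq_conj_mul_sub_conj_mul (p q x y : ℂ) :
    ‖p * x + q * y‖ ^ 2 + ‖conj q * x - conj p * y‖ ^ 2
      = (‖p‖ ^ 2 + ‖q‖ ^ 2) * (‖x‖ ^ 2 + ‖y‖ ^ 2) := by
  simp only [Complex.sq_norm, normSq_apply, add_re, add_im, sub_re, sub_im, mul_re, mul_im,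
    conj_re, conj_im]
  ring

theorem sum_norm_sq_add_sum_norm_sq {ι : Type*} [Fintype ι] (p q : ℂ) (v : Fin 2 × ι → ℂ) :
    ∑ k, ‖p * v (0, k) + q * v (1, k)‖ ^ 2 + ∑ k, ‖conj q * v (0, k) - conj p * v (1, k)‖ ^ 2
      = (‖p‖ ^ 2 + ‖q‖ ^ 2) * ∑ j, ‖v j‖ ^ 2 := by
  simp_rw [← Finset.sum_add_distrib, norm_sq_mul_add_mul_add_norm_sq_conj_mul_sub_conj_mul,
    Fintype.sum_prod_type, Fin.sum_univ_two, ← Finset.sum_add_distrib, Finset.mul_sum]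

theorem sum_norm_sq_mul_add_mul_le_and_eq_iff {ι : Type*} [Fintype ι] (p q : ℂ)
    {v : Fin 2 × ι → ℂ} (hv : ∑ j, ‖v j‖ ^ 2 = 1) :
    ∑ k, ‖p * v (0, k) + q * v (1, k)‖ ^ 2 ≤ ‖p‖ ^ 2 + ‖q‖ ^ 2 ∧
      (∑ k, ‖p * v (0, k) + q * v (1, k)‖ ^ 2 = ‖p‖ ^ 2 + ‖q‖ ^ 2 ↔
        ∀ k, conj q * v (0, k) = conj p * v (1, k)) := by
  have hsum := sum_norm_sq_add_sum_norm_sq p q v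
  rw [hv, mul_one] at hsum
  have hrest : 0 ≤ ∑ k, ‖conj q * v (0, k) - conj p * v (1, k)‖ ^ 2 := by positivity
  refine ⟨by linarith, ?_⟩
  rw [← hsum, left_eq_add, Finset.sum_eq_zero_iff_of_nonneg fun k _ => by positivity]
  simp [sub_eq_zero]

theorem sum_norm_sq_mulVec_of_mem_unitaryGroup {𝕜 n : Type*} [RCLike 𝕜] [Fintype n]
    [DecidableEq n] {U : Matrix n n 𝕜} (hU : U ∈ unitaryGroup n 𝕜) (x : n → 𝕜) :
    ∑ i, ‖(U *ᵥ x) i‖ ^ 2 = ∑ i, ‖x i‖ ^ 2 := by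
  have hdot : ∀ y : n → 𝕜, ((∑ i, ‖y i‖ ^ 2 : ℝ) : 𝕜) = star y ⬝ᵥ y := fun y => by
    simp [dotProduct, RCLike.conj_mul]
  apply RCLike.ofReal_injective (K := 𝕜)
  rw [hdot, hdot, star_mulVec, ← dotProduct_mulVec, mulVec_mulVec, ← star_eq_conjTranspose,
    (mem_unitaryGroup_iff').mp hU, one_mulVec]

section Span

variable {K ι : Type*} [Field K] [Fintype ι] [DecidableEq ι]

theorem exists_mul_eq_and_mul_eq_iff {p q : K} (h : p ≠ 0 ∨ q ≠ 0) (x y : K) :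
    (∃ α, α * p = x ∧ α * q = y) ↔ q * x = p * y := by
  refine ⟨fun ⟨α, hx, hy⟩ => by rw [← hx, ← hy]; ring, fun hxy => ?_⟩
  rcases h with hp | hq
  · exact ⟨x / p, by field_simp, by field_simp; linear_combination hxy⟩
  · exact ⟨y / q, by field_simp; linear_combination -hxy, by field_simp⟩

theorem mem_span_range_ite_mul_ite_iff {p q : K} (h : p ≠ 0 ∨ q ≠ 0) (v : Fin 2 × ι → K) :
    v ∈ Submodule.span K (Set.range fun ℓ : ι => fun pk : Fin 2 × ι =>
        (if pk.1 = 0 then p else q) * (if pk.2 = ℓ then (1 : K) else 0))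
      ↔ ∀ k, q * v (0, k) = p * v (1, k) := by
  have hcomb : ∀ α : ι → K, ∑ ℓ, α ℓ • (fun pk : Fin 2 × ι =>
      (if pk.1 = 0 then p else q) * (if pk.2 = ℓ then (1 : K) else 0))
        = fun pk => α pk.2 * (if pk.1 = 0 then p else q) := fun α => by
    ext pk
    simp [Finset.sum_apply, mul_comm]
  simp_rw [Submodule.mem_span_range_iff_exists_fun, hcomb, funext_iff, Prod.forall,
    Fin.forall_fin_two, ← exists_mul_eq_and_mul_eq_iff h, Classical.skolem]
  simp [forall_and]

end Span

theorem stmt_0 (Mh Mv : ℕ) (hMh : 1 ≤ Mh) (hMv : 1 ≤ Mv)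
    (ρvv ρvh : ℂ) (hρ : (ρvv, ρvh) ≠ (0, 0))
    (R : Matrix (Fin 2 × (Fin Mh × Fin Mv)) (Fin 2 × (Fin Mh × Fin Mv)) ℂ)
    (hR : R ∈ Matrix.unitaryGroup (Fin 2 × (Fin Mh × Fin Mv)) ℂ)
    (c : Fin 2 × (Fin Mh × Fin Mv) → ℂ)
    (hc : ∑ j : Fin 2 × (Fin Mh × Fin Mv), ‖c j‖ ^ 2 = 1) :
    let b : ℝ := (Real.sqrt (‖ρvv‖ ^ 2 + ‖ρvh‖ ^ 2))⁻¹
    let g : ℝ → ℝ → ℝ := fun ψaz ψel =>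
      ‖(b : ℂ) * ∑ pk : Fin 2 × (Fin Mh × Fin Mv),
        (if pk.1 = 0 then ρvv else ρvh) *
          (starRingEnd ℂ) (arv Mh ψaz pk.2.1 * arv Mv ψel pk.2.2) * R.mulVec c pk‖ ^ 2
    (∫ ψaz in (-Real.pi)..Real.pi, ∫ ψel in (-Real.pi)..Real.pi, g ψaz ψel)
        ≤ (2 * Real.pi) ^ 2 / ((Mh : ℝ) * (Mv : ℝ)) ∧
    ((∫ ψaz in (-Real.pi)..Real.pi, ∫ ψel in (-Real.pi)..Real.pi, g ψaz ψel)
          = (2 * Real.pi) ^ 2 / ((Mh : ℝ) * (Mv : ℝ)) ↔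
      R.mulVec c ∈ Submodule.span ℂ (Set.range fun ℓ : Fin Mh × Fin Mv =>
        fun pk : Fin 2 × (Fin Mh × Fin Mv) =>
          (if pk.1 = 0 then (starRingEnd ℂ) ρvv else (starRingEnd ℂ) ρvh) *
            (if pk.2 = ℓ then (1 : ℂ) else 0))) := by
  intro b g
  have hρ' : ρvv ≠ 0 ∨ ρvh ≠ 0 := by rwa [Ne, Prod.mk.injEq, not_and_or] at hρ
  obtain ⟨hle, heq⟩ := sum_norm_sq_mul_add_mul_le_and_eq_iff ρvv ρvh
    ((sum_norm_sq_mulVec_of_mem_unitaryGroup hR c).trans hc)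
  rw [mem_span_range_ite_mul_ite_iff (by simpa using hρ' : conj ρvv ≠ 0 ∨ conj ρvh ≠ 0), ← heq]
  set s := ‖ρvv‖ ^ 2 + ‖ρvh‖ ^ 2
  have hs : 0 < s := by
    rcases hρ' with h | h
    · exact add_pos_of_pos_of_nonneg (pow_pos (norm_pos_iff.2 h) 2) (sq_nonneg _)
    · exact add_pos_of_nonneg_of_pos (sq_nonneg _) (pow_pos (norm_pos_iff.2 h) 2)
  have hg : ∀ x y, g x y = s⁻¹ * ‖∑ k, (ρvv * (R *ᵥ c) (0, k) + ρvh * (R *ᵥ c) (1, k)) *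
      conj (arv Mh x k.1 * arv Mv y k.2)‖ ^ 2 := fun x y => by
    simp only [g, b, norm_mul, mul_pow, norm_real, Real.norm_eq_abs, sq_abs, inv_pow,
      sum_fin_two_prod_ite_mul_conj_mul ρvv ρvh
        fun k : Fin Mh × Fin Mv => arv Mh x k.1 * arv Mv y k.2]
    rw [Real.sq_sqrt hs.le]
  have hC : 0 < (2 * Real.pi) ^ 2 / ((Mh : ℝ) * (Mv : ℝ)) := by
    have : (0 : ℝ) < Mh := by exact_mod_cast hMh
    have : (0 : ℝ) < Mv := by exact_mod_cast hMv
    positivity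
  simp_rw [hg, intervalIntegral.integral_const_mul,
    integral_integral_norm_sq_sum_mul_conj_arv_mul_arv, mul_left_comm s⁻¹]
  refine ⟨mul_le_of_le_one_right hC.le ((inv_mul_le_one₀ hs).2 hle), ?_⟩
  rw [mul_eq_left₀ hC.ne', inv_mul_eq_one₀ hs.ne', eq_comm]
end

section
/- Let m, N ∈ ℕ, let D ∈ ℂ^{m×N}, let g ∈ ℂ^N, let ρ_vv, ρ_vh ∈ ℂ with (ρ_vv, ρ_vh) ≠ (0,0), b = (|ρ_vv|² + |ρ_vh|²)^{−1/2}, and let A = [ρ_vv, ρ_vh] be the 1×2 row vector. Then sup { |g^H (A ⊗ D^H) c|² / ‖(A ⊗ D^H) c‖₂² : c ∈ ℂ^{2m}, (A ⊗ D^H) c ≠ 0 } = sup { |g^H D^H μ|² / ‖D^H μ‖₂² : μ ∈ ℂ^{m}, D^H μ ≠ 0 }, and for every unit-norm μ ∈ ℂ^m attaining the right-hand supremum, the unit-norm vector c = b ([ρ_vv*, ρ_vh*]ᵀ ⊗ μ) attains the left-hand supremum. -/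
/-!
Write `a = [ρ_vv, ρ_vh]`. Summing the two polarization blocks of `c` against `a` gives
`(a ⊗ Dᴴ) c = Dᴴ (a₀ c₀ + a₁ c₁)`, and `c ↦ a₀ c₀ + a₁ c₁` is onto `ℂ^m` (it sends `star a ⊗ μ` to
`‖a‖² μ`), so both suprema range over the same set of values. The SE ratio is invariant under
nonzero scaling, and `b (star a ⊗ μ)` has unit norm and is mapped to `‖a‖ μ`, so it attains the
left-hand supremum whenever `μ` attains the right-hand one.
-/

open Complex Matrix

section PolarizationCombining

variable {𝕜 κ ι : Type*} [RCLike 𝕜] [Fintype κ]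

/- For a row vector `a`: `polCombine a c = (a ⊗ I) c` and `polSpread a μ = star a ⊗ μ`. -/
def polCombine (a : κ → 𝕜) (c : κ × ι → 𝕜) : ι → 𝕜 := fun i => ∑ j, a j * c (j, i)

def polSpread (a : κ → 𝕜) (μ : ι → 𝕜) : κ × ι → 𝕜 := fun p => star (a p.1) * μ p.2

theorem sum_kronecker_mul_eq_mulVec_polCombine {η : Type*} [Fintype ι] (a : κ → 𝕜)
    (M : Matrix η ι 𝕜) (c : κ × ι → 𝕜) (n : η) :
    ∑ p : κ × ι, a p.1 * M n p.2 * c p = (M *ᵥ polCombine a c) n := by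
  simp only [mulVec, dotProduct, polCombine, Finset.mul_sum, Fintype.sum_prod_type]
  rw [Finset.sum_comm]
  exact Finset.sum_congr rfl fun _ _ => Finset.sum_congr rfl fun _ _ => by ring

theorem polCombine_smul (a : κ → 𝕜) (k : 𝕜) (c : κ × ι → 𝕜) :
    polCombine a (k • c) = k • polCombine a c := by
  funext i
  simp only [polCombine, Pi.smul_apply, smul_eq_mul, Finset.mul_sum]
  exact Finset.sum_congr rfl fun _ _ => by ring

theorem polCombine_polSpread (a : κ → 𝕜) (μ : ι → 𝕜) :
    polCombine a (polSpread a μ) = ((∑ j, ‖a j‖ ^ 2 : ℝ) : 𝕜) • μ := by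
  funext i
  simp only [polCombine, polSpread, ← mul_assoc, RCLike.star_def, RCLike.mul_conj,
    ← Finset.sum_mul, Pi.smul_apply, smul_eq_mul]
  push_cast
  rfl

theorem sum_norm_sq_pos_of_ne_zero {a : κ → 𝕜} (ha : a ≠ 0) : 0 < ∑ j, ‖a j‖ ^ 2 := by
  obtain ⟨j, hj⟩ := Function.ne_iff.mp ha
  exact Finset.sum_pos' (fun _ _ => by positivity) ⟨j, Finset.mem_univ _, by positivity⟩

theorem polCombine_surjective {a : κ → 𝕜} (ha : a ≠ 0) :
    Function.Surjective (polCombine a : (κ × ι → 𝕜) → ι → 𝕜) := by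
  intro μ
  have hs : ((∑ j, ‖a j‖ ^ 2 : ℝ) : 𝕜) ≠ 0 := by
    exact_mod_cast (sum_norm_sq_pos_of_ne_zero ha).ne'
  refine ⟨polSpread a (((∑ j, ‖a j‖ ^ 2 : ℝ) : 𝕜)⁻¹ • μ), ?_⟩
  rw [polCombine_polSpread, smul_smul, mul_inv_cancel₀ hs, one_smul]

variable [Fintype ι]

theorem sum_norm_sq_polSpread (a : κ → 𝕜) (μ : ι → 𝕜) :
    ∑ p, ‖polSpread a μ p‖ ^ 2 = (∑ j, ‖a j‖ ^ 2) * ∑ i, ‖μ i‖ ^ 2 := by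
  simp only [polSpread, norm_mul, norm_star, mul_pow, Fintype.sum_prod_type, Finset.sum_mul_sum]

theorem sum_norm_sq_normalize_polSpread {a : κ → 𝕜} (ha : a ≠ 0) (μ : ι → 𝕜) :
    ∑ p, ‖(((√(∑ j, ‖a j‖ ^ 2))⁻¹ : ℝ) : 𝕜) • polSpread a μ p‖ ^ 2 = ∑ i, ‖μ i‖ ^ 2 := by
  have hs := sum_norm_sq_pos_of_ne_zero ha
  simp only [norm_smul, mul_pow, ← Finset.mul_sum, sum_norm_sq_polSpread, RCLike.norm_ofReal,
    sq_abs, inv_pow, Real.sq_sqrt hs.le, ← mul_assoc, inv_mul_cancel₀ hs.ne', one_mul]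

noncomputable def seRatio (g w : ι → 𝕜) : ℝ := ‖star g ⬝ᵥ w‖ ^ 2 / ∑ n, ‖w n‖ ^ 2

theorem seRatio_smul (g w : ι → 𝕜) {k : 𝕜} (hk : k ≠ 0) : seRatio g (k • w) = seRatio g w := by
  have hk2 : ‖k‖ ^ 2 ≠ 0 := by positivity
  simp only [seRatio, dotProduct_smul, norm_smul, Pi.smul_apply, mul_pow, ← Finset.mul_sum,
    mul_div_mul_left _ _ hk2]

end PolarizationCombining

theorem stmt_7 (m N : ℕ) (D : Matrix (Fin m) (Fin N) ℂ) (g : Fin N → ℂ)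
    (ρvv ρvh : ℂ) (hρ : (ρvv, ρvh) ≠ (0, 0)) :
    let b : ℝ := (Real.sqrt (‖ρvv‖ ^ 2 + ‖ρvh‖ ^ 2))⁻¹
    let vecA : ((Fin 2 × Fin m) → ℂ) → (Fin N → ℂ) := fun c n =>
      ∑ pi : Fin 2 × Fin m,
        (if pi.1 = 0 then ρvv else ρvh) * (starRingEnd ℂ) (D pi.2 n) * c pi
    let vecB : (Fin m → ℂ) → (Fin N → ℂ) := fun μ n =>
      ∑ i : Fin m, (starRingEnd ℂ) (D i n) * μ i
    let ratio : (Fin N → ℂ) → ℝ := fun w =>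
      ‖∑ n : Fin N, (starRingEnd ℂ) (g n) * w n‖ ^ 2 /
        ∑ n : Fin N, ‖w n‖ ^ 2
    sSup {r : ℝ | ∃ c : (Fin 2 × Fin m) → ℂ, vecA c ≠ 0 ∧ r = ratio (vecA c)}
        = sSup {r : ℝ | ∃ μ : Fin m → ℂ, vecB μ ≠ 0 ∧ r = ratio (vecB μ)} ∧
    (∀ μ : Fin m → ℂ, (∑ i : Fin m, ‖μ i‖ ^ 2 = 1) →
      vecB μ ≠ 0 →
      (∀ μ' : Fin m → ℂ, vecB μ' ≠ 0 → ratio (vecB μ') ≤ ratio (vecB μ)) →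
      let c0 : (Fin 2 × Fin m) → ℂ := fun pi =>
        (b : ℂ) * ((if pi.1 = 0 then (starRingEnd ℂ) ρvv else (starRingEnd ℂ) ρvh) * μ pi.2)
      (∑ j : Fin 2 × Fin m, ‖c0 j‖ ^ 2 = 1) ∧
      vecA c0 ≠ 0 ∧
      ∀ c : (Fin 2 × Fin m) → ℂ, vecA c ≠ 0 → ratio (vecA c) ≤ ratio (vecA c0)) := by
  intro b vecA vecB ratio
  set a : Fin 2 → ℂ := ![ρvv, ρvh]
  have ha : a ≠ 0 := fun h => hρ (by simpa [a] using h)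
  have hB : ∀ μ, vecB μ = Dᴴ *ᵥ μ := fun _ => rfl
  have hA : ∀ c, vecA c = vecB (polCombine a c) := fun c => by
    funext n
    show _ = (Dᴴ *ᵥ polCombine a c) n
    rw [← sum_kronecker_mul_eq_mulVec_polCombine]
    exact Finset.sum_congr rfl fun ⟨j, i⟩ _ => by fin_cases j <;> rfl
  have hratio : ratio = seRatio g := rfl
  refine ⟨?_, fun μ hnorm hμ hmax => ?_⟩
  · simp_rw [hA]
    congr 1
    ext r
    exact ((polCombine_surjective ha).exists (p := fun μ => vecB μ ≠ 0 ∧ r = ratio (vecB μ))).symm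
  intro c0
  have hb : b = (√(∑ j, ‖a j‖ ^ 2))⁻¹ := by simp [b, a, Fin.sum_univ_two]
  have hc0 : c0 = (b : ℂ) • polSpread a μ := by
    funext ⟨j, i⟩
    fin_cases j <;> rfl
  have hscale : (b : ℂ) * ((∑ j, ‖a j‖ ^ 2 : ℝ) : ℂ) ≠ 0 := by
    have := sum_norm_sq_pos_of_ne_zero ha
    rw [hb]
    exact_mod_cast (by positivity : (√(∑ j, ‖a j‖ ^ 2))⁻¹ * ∑ j, ‖a j‖ ^ 2 ≠ 0)
  have hAc0 : vecA c0 = ((b : ℂ) * ((∑ j, ‖a j‖ ^ 2 : ℝ) : ℂ)) • vecB μ := by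
    rw [hA, hc0, polCombine_smul, polCombine_polSpread, smul_smul, hB, hB, mulVec_smul]
    rfl
  refine ⟨?_, ?_, fun c hc => ?_⟩
  · rw [hc0, hb, ← hnorm]
    exact sum_norm_sq_normalize_polSpread ha μ
  · rw [hAc0]; exact smul_ne_zero hscale hμ
  · rw [hratio, hAc0, seRatio_smul _ _ hscale, hA]
    exact hmax _ (hA c ▸ hc)
end

section
/- Let m, L ∈ ℕ, let D₁ ∈ ℂ^{m×L}, let ρ_vv, ρ_vh ∈ ℂ with (ρ_vv, ρ_vh) ≠ (0,0), b = (|ρ_vv|² + |ρ_vh|²)^{−1/2}, and let A = [ρ_vv, ρ_vh]. Then the maximum of ‖(A ⊗ D₁^H) c‖₂² over all unit-norm c ∈ ℂ^{2m} equals (|ρ_vv|² + |ρ_vh|²) · λ_max(D₁ D₁^H), where λ_max denotes the largest eigenvalue of the positive semidefinite Hermitian matrix D₁ D₁^H, and the maximum is attained by c = b ([ρ_vv*, ρ_vh*]ᵀ ⊗ w) for any unit-norm eigenvector w of D₁ D₁^H associated with λ_max. -/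
/-!
Write `a = [ρ_vv, ρ_vh]` and `S = ‖a‖²`. The `l`-th entry of `(a ⊗ D₁ᴴ) c` is `(D₁ᴴ u) l` with
`u i = ∑ p, a p * c (p, i)`, so `‖(a ⊗ D₁ᴴ) c‖² = re ⟪u, D₁ D₁ᴴ u⟫ ≤ λ_max ‖u‖²` (Rayleigh), and
Cauchy–Schwarz in `p` gives `‖u‖² ≤ S ‖c‖²`. For `c = b (conj a ⊗ w)` one gets `u = b S w`, so both
inequalities become equalities once `w` is a unit eigenvector for `λ_max`, and `b² S = 1`.
-/

open Complex Matrix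
open scoped MatrixOrder ComplexConjugate

variable {𝕜 m n ι : Type*} [RCLike 𝕜] [Fintype n] [Fintype ι]

lemma sum_norm_sq_pos_of_ne_zero_s8 {v : n → 𝕜} (hv : v ≠ 0) : 0 < ∑ i, ‖v i‖ ^ 2 := by
  obtain ⟨i, hi⟩ := Function.ne_iff.mp hv
  exact Finset.sum_pos' (fun j _ => by positivity) ⟨i, Finset.mem_univ i, by positivity⟩

lemma norm_sum_mul_sq_le (a x : ι → 𝕜) :
    ‖∑ p, a p * x p‖ ^ 2 ≤ (∑ p, ‖a p‖ ^ 2) * ∑ p, ‖x p‖ ^ 2 :=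
  calc ‖∑ p, a p * x p‖ ^ 2 ≤ (∑ p, ‖a p‖ * ‖x p‖) ^ 2 := by
        gcongr
        exact (norm_sum_le _ _).trans_eq (by simp only [norm_mul])
    _ ≤ (∑ p, ‖a p‖ ^ 2) * ∑ p, ‖x p‖ ^ 2 := Finset.sum_mul_sq_le_sq_mul_sq _ _ _

namespace Matrix

lemma re_star_dotProduct_self (v : n → 𝕜) : RCLike.re (star v ⬝ᵥ v) = ∑ i, ‖v i‖ ^ 2 := by
  simp only [dotProduct, Pi.star_apply, RCLike.star_def, RCLike.conj_mul, map_sum,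
    ← RCLike.ofReal_pow, RCLike.ofReal_re]

lemma sum_norm_sq_conjTranspose_mulVec [Fintype m] (D : Matrix m n 𝕜) (u : m → 𝕜) :
    ∑ l, ‖(Dᴴ *ᵥ u) l‖ ^ 2 = RCLike.re (star u ⬝ᵥ (D * Dᴴ) *ᵥ u) := by
  rw [← mulVec_mulVec, dotProduct_mulVec, ← conjTranspose_conjTranspose D, ← star_mulVec,
    conjTranspose_conjTranspose, re_star_dotProduct_self]

lemma sum_norm_sq_conjTranspose_mulVec_of_mulVec_eq_smul [Fintype m] {D : Matrix m n 𝕜}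
    {w : m → 𝕜} {r : ℝ} (h : (D * Dᴴ) *ᵥ w = (r : 𝕜) • w) :
    ∑ l, ‖(Dᴴ *ᵥ w) l‖ ^ 2 = r * ∑ i, ‖w i‖ ^ 2 := by
  rw [sum_norm_sq_conjTranspose_mulVec, h, dotProduct_smul, smul_eq_mul, RCLike.re_ofReal_mul,
    re_star_dotProduct_self]

lemma nonneg_of_mul_conjTranspose_mulVec_eq_smul [Fintype m] {D : Matrix m n 𝕜} {v : m → 𝕜}
    (hv : v ≠ 0) {r : ℝ} (h : (D * Dᴴ) *ᵥ v = (r : 𝕜) • v) : 0 ≤ r := by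
  have hsum := sum_norm_sq_conjTranspose_mulVec_of_mulVec_eq_smul h
  exact nonneg_of_mul_nonneg_left (hsum ▸ by positivity) (sum_norm_sq_pos_of_ne_zero_s8 hv)

lemma IsHermitian.exists_mulVec_eq_eigenvalues_smul [DecidableEq n] {A : Matrix n n 𝕜}
    (hA : A.IsHermitian) (i : n) :
    ∃ v : n → 𝕜, v ≠ 0 ∧ A *ᵥ v = (hA.eigenvalues i : 𝕜) • v :=
  ⟨_, (WithLp.ofLp_eq_zero 2).ne.2 (hA.eigenvectorBasis.orthonormal.ne_zero i),
    (hA.mulVec_eigenvectorBasis i).trans (by ext; simp [RCLike.real_smul_eq_coe_mul])⟩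

lemma IsHermitian.re_star_dotProduct_mulVec_le [DecidableEq n] {A : Matrix n n 𝕜}
    (hA : A.IsHermitian) {r : ℝ} (h : ∀ i, hA.eigenvalues i ≤ r) (x : n → 𝕜) :
    RCLike.re (star x ⬝ᵥ A *ᵥ x) ≤ r * ∑ i, ‖x i‖ ^ 2 := by
  have hle : A ≤ algebraMap ℝ (Matrix n n 𝕜) r := by
    refine le_algebraMap_of_spectrum_le (fun y hy => ?_) hA.isSelfAdjoint
    obtain ⟨i, rfl⟩ := hA.spectrum_real_eq_range_eigenvalues ▸ hy
    exact h i
  simpa [sub_mulVec, dotProduct_sub, algebraMap_eq_diagonal, Pi.algebraMap_def, mul_comm,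
    RCLike.smul_re, re_star_dotProduct_self] using (le_iff.mp hle).re_dotProduct_nonneg x

lemma sum_prod_mul_conj_mul_eq_conjTranspose_mulVec (a : ι → 𝕜) (D : Matrix n m 𝕜)
    (c : ι × n → 𝕜) (l : m) :
    ∑ pi : ι × n, a pi.1 * conj (D pi.2 l) * c pi
      = (Dᴴ *ᵥ fun i => ∑ p, a p * c (p, i)) l := by
  simp only [mulVec, dotProduct, conjTranspose_apply, RCLike.star_def, Fintype.sum_prod_type,
    Finset.mul_sum]
  rw [Finset.sum_comm]
  exact Finset.sum_congr rfl fun i _ => Finset.sum_congr rfl fun p _ => by ring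

lemma sum_norm_sq_kronecker_le [Fintype m] [DecidableEq n] {D : Matrix n m 𝕜} {r : ℝ}
    (hr : 0 ≤ r) (h : ∀ i, (isHermitian_mul_conjTranspose_self D).eigenvalues i ≤ r)
    (a : ι → 𝕜) (c : ι × n → 𝕜) :
    ∑ l, ‖∑ pi : ι × n, a pi.1 * conj (D pi.2 l) * c pi‖ ^ 2
      ≤ (∑ p, ‖a p‖ ^ 2) * r * ∑ j, ‖c j‖ ^ 2 := by
  set u : n → 𝕜 := fun i => ∑ p, a p * c (p, i)
  have hu : ∑ i, ‖u i‖ ^ 2 ≤ (∑ p, ‖a p‖ ^ 2) * ∑ j, ‖c j‖ ^ 2 := by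
    rw [Fintype.sum_prod_type, Finset.sum_comm, Finset.mul_sum]
    exact Finset.sum_le_sum fun i _ => norm_sum_mul_sq_le a fun p => c (p, i)
  calc ∑ l, ‖∑ pi : ι × n, a pi.1 * conj (D pi.2 l) * c pi‖ ^ 2
      = RCLike.re (star u ⬝ᵥ (D * Dᴴ) *ᵥ u) := by
        simp only [sum_prod_mul_conj_mul_eq_conjTranspose_mulVec, sum_norm_sq_conjTranspose_mulVec]
        rfl
    _ ≤ r * ∑ i, ‖u i‖ ^ 2 :=
        (isHermitian_mul_conjTranspose_self D).re_star_dotProduct_mulVec_le h u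
    _ ≤ r * ((∑ p, ‖a p‖ ^ 2) * ∑ j, ‖c j‖ ^ 2) := by gcongr
    _ = (∑ p, ‖a p‖ ^ 2) * r * ∑ j, ‖c j‖ ^ 2 := by ring

lemma sum_norm_sq_smul_conj_mul (β : 𝕜) (a : ι → 𝕜) (w : n → 𝕜) :
    ∑ j : ι × n, ‖β * (conj (a j.1) * w j.2)‖ ^ 2
      = ‖β‖ ^ 2 * (∑ p, ‖a p‖ ^ 2) * ∑ i, ‖w i‖ ^ 2 := by
  simp only [norm_mul, RCLike.norm_conj, mul_pow, Fintype.sum_prod_type, ← Finset.mul_sum,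
    ← Finset.sum_mul, mul_assoc]

lemma sum_norm_sq_kronecker_smul_conj_mul [Fintype m] (D : Matrix n m 𝕜) (β : 𝕜) (a : ι → 𝕜)
    (w : n → 𝕜) :
    ∑ l, ‖∑ pi : ι × n, a pi.1 * conj (D pi.2 l) * (β * (conj (a pi.1) * w pi.2))‖ ^ 2
      = ‖β‖ ^ 2 * (∑ p, ‖a p‖ ^ 2) ^ 2 * ∑ l, ‖(Dᴴ *ᵥ w) l‖ ^ 2 := by
  have hu : (fun i => ∑ p, a p * (β * (conj (a p) * w i)))
      = (β * ((∑ p, ‖a p‖ ^ 2 : ℝ) : 𝕜)) • w := by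
    ext i
    simp only [Pi.smul_apply, smul_eq_mul, RCLike.ofReal_sum, RCLike.ofReal_pow, Finset.mul_sum,
      Finset.sum_mul, ← RCLike.mul_conj]
    exact Finset.sum_congr rfl fun p _ => by ring
  simp only [sum_prod_mul_conj_mul_eq_conjTranspose_mulVec, hu, mulVec_smul, Pi.smul_apply,
    norm_smul, norm_mul, RCLike.norm_ofReal, mul_pow, sq_abs, ← Finset.mul_sum]

end Matrix

theorem stmt_8 (m L : ℕ) (D1 : Matrix (Fin m) (Fin L) ℂ)
    (ρvv ρvh : ℂ) (hρ : (ρvv, ρvh) ≠ (0, 0))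
    (lam : ℝ)
    (hlam1 : ∃ v : Fin m → ℂ, v ≠ 0 ∧ (D1 * D1ᴴ).mulVec v = (lam : ℂ) • v)
    (hlam2 : ∀ μ : ℝ,
      (∃ v : Fin m → ℂ, v ≠ 0 ∧ (D1 * D1ᴴ).mulVec v = (μ : ℂ) • v) → μ ≤ lam) :
    let b : ℝ := (Real.sqrt (‖ρvv‖ ^ 2 + ‖ρvh‖ ^ 2))⁻¹
    let F : ((Fin 2 × Fin m) → ℂ) → ℝ := fun c =>
      ∑ l : Fin L, ‖(∑ pi : Fin 2 × Fin m,
        (if pi.1 = 0 then ρvv else ρvh) * (starRingEnd ℂ) (D1 pi.2 l) * c pi)‖ ^ 2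
    (∀ c : (Fin 2 × Fin m) → ℂ, (∑ j : Fin 2 × Fin m, ‖(c j)‖ ^ 2 = 1) →
        F c ≤ (‖ρvv‖ ^ 2 + ‖ρvh‖ ^ 2) * lam) ∧
    (∀ w : Fin m → ℂ, (∑ i : Fin m, ‖(w i)‖ ^ 2 = 1) →
      (D1 * D1ᴴ).mulVec w = (lam : ℂ) • w →
      (∑ j : Fin 2 × Fin m, ‖((b : ℂ) * ((if j.1 = 0 then (starRingEnd ℂ) ρvv else (starRingEnd ℂ) ρvh) * w j.2))‖ ^ 2
        = 1) ∧
      F (fun pi : Fin 2 × Fin m =>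
          (b : ℂ) * ((if pi.1 = 0 then (starRingEnd ℂ) ρvv else (starRingEnd ℂ) ρvh) * w pi.2))
        = (‖ρvv‖ ^ 2 + ‖ρvh‖ ^ 2) * lam) := by
  intro b F
  set a : Fin 2 → ℂ := fun p => if p = 0 then ρvv else ρvh
  have hconj (p : Fin 2) : (if p = 0 then conj ρvv else conj ρvh) = conj (a p) :=
    (apply_ite _ _ _ _).symm
  have hS : ∑ p, ‖a p‖ ^ 2 = ‖ρvv‖ ^ 2 + ‖ρvh‖ ^ 2 := by simp [a, Fin.sum_univ_two]
  have hSpos : 0 < ‖ρvv‖ ^ 2 + ‖ρvh‖ ^ 2 := hS ▸ sum_norm_sq_pos_of_ne_zero_s8 fun h =>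
    hρ (by simpa [a] using And.intro (congrFun h 0) (congrFun h 1))
  have hb : ‖(b : ℂ)‖ ^ 2 * (‖ρvv‖ ^ 2 + ‖ρvh‖ ^ 2) = 1 := by
    rw [Complex.norm_real, Real.norm_eq_abs, sq_abs, inv_pow, Real.sq_sqrt hSpos.le,
      inv_mul_cancel₀ hSpos.ne']
  have hM := isHermitian_mul_conjTranspose_self D1
  have hlam : ∀ i, hM.eigenvalues i ≤ lam :=
    fun i => hlam2 _ (hM.exists_mulVec_eq_eigenvalues_smul i)
  obtain ⟨v, hv, hvlam⟩ := hlam1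
  refine ⟨fun c hc => ?_, fun w hw hwlam => ?_⟩
  · simpa only [hS, hc, mul_one] using
      sum_norm_sq_kronecker_le (nonneg_of_mul_conjTranspose_mulVec_eq_smul hv hvlam) hlam a c
  · have hnorm := sum_norm_sq_smul_conj_mul (b : ℂ) a w
    have hval := sum_norm_sq_kronecker_smul_conj_mul D1 (b : ℂ) a w
    simp only [← hconj] at hnorm hval
    rw [hw, hS] at hnorm
    rw [sum_norm_sq_conjTranspose_mulVec_of_mulVec_eq_smul hwlam, hw, hS] at hval
    exact ⟨hnorm.trans (by linear_combination hb),
      hval.trans (by linear_combination lam * (‖ρvv‖ ^ 2 + ‖ρvh‖ ^ 2) * hb)⟩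
end

section
/- Let M_h, M_v ≥ 1, M = 2 M_h M_v, ρ_vv, ρ_vh ∈ ℂ with (ρ_vv, ρ_vh) ≠ (0,0), b = (|ρ_vv|² + |ρ_vh|²)^{−1/2}, and let R ∈ ℂ^{M×M} be unitary. Define the dualization map V_dual : ℂ^{M/2} → ℂ^M by V_dual(c) = b R^H ([ρ_vv*, ρ_vh*]ᵀ ⊗ c). Then for every c ∈ ℂ^{M/2} and all ψ_az, ψ_el ∈ ℝ, the dual-polarization reference gain equals the single-polarization beam pattern: | b ([ρ_vv, ρ_vh] ⊗ (d_{M_h}(ψ_az) ⊗ d_{M_v}(ψ_el))^H) R · V_dual(c) |² = | (d_{M_h}(ψ_az) ⊗ d_{M_v}(ψ_el))^H c |². Moreover ‖V_dual(c)‖₂ = ‖c‖₂. -/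
/-!
Since `R Rᴴ = 1`, the vector `R V_dual(c)` is just `b ([ρ_vv*, ρ_vh*]ᵀ ⊗ c)`. By the
mixed-product property of the Kronecker product the gain then factors as
`b² (|ρ_vv|² + |ρ_vh|²) · dᴴ c = dᴴ c`, where `d = d_{M_h}(ψ_az) ⊗ d_{M_v}(ψ_el)`.
For the norm, `Rᴴ` is an isometry and `‖u ⊗ c‖ = ‖u‖ ‖c‖`.
-/

open Complex Matrix

section Unitary

variable {𝕜 n : Type*} [RCLike 𝕜] [Fintype n]

theorem ofReal_sum_norm_sq_eq_star_dotProduct (v : n → 𝕜) :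
    ((∑ i, ‖v i‖ ^ 2 : ℝ) : 𝕜) = star v ⬝ᵥ v := by
  push_cast
  exact Finset.sum_congr rfl fun i _ => (RCLike.conj_mul (v i)).symm

variable [DecidableEq n] {U : Matrix n n 𝕜}

theorem mulVec_conjTranspose_mulVec_of_mem_unitaryGroup (hU : U ∈ unitaryGroup n 𝕜)
    (x : n → 𝕜) : U *ᵥ (Uᴴ *ᵥ x) = x := by
  rw [mulVec_mulVec, ← star_eq_conjTranspose, mem_unitaryGroup_iff.1 hU, one_mulVec]

theorem sum_norm_sq_conjTranspose_mulVec_of_mem_unitaryGroup (hU : U ∈ unitaryGroup n 𝕜)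
    (x : n → 𝕜) : ∑ i, ‖(Uᴴ *ᵥ x) i‖ ^ 2 = ∑ i, ‖x i‖ ^ 2 := by
  have h : star (Uᴴ *ᵥ x) ⬝ᵥ (Uᴴ *ᵥ x) = star x ⬝ᵥ x := by
    rw [star_mulVec, conjTranspose_conjTranspose, dotProduct_mulVec, vecMul_vecMul,
      ← star_eq_conjTranspose, mem_unitaryGroup_iff.1 hU, vecMul_one]
  exact_mod_cast (ofReal_sum_norm_sq_eq_star_dotProduct _).trans
    (h.trans (ofReal_sum_norm_sq_eq_star_dotProduct x).symm)

end Unitary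

section Kronecker

variable {ι κ : Type*} [Fintype ι] [Fintype κ]

theorem sum_kronecker_mul_kronecker {R : Type*} [CommSemiring R] (u w : ι → R) (a c : κ → R)
    (β : R) :
    ∑ pk : ι × κ, u pk.1 * a pk.2 * (β * (w pk.1 * c pk.2))
      = β * (∑ i, u i * w i) * ∑ k, a k * c k := by
  rw [Fintype.sum_prod_type, mul_assoc, Finset.sum_mul_sum, Finset.mul_sum]
  refine Finset.sum_congr rfl fun i _ => ?_
  rw [Finset.mul_sum]
  exact Finset.sum_congr rfl fun k _ => by ring

theorem sum_norm_sq_kronecker {𝕜 : Type*} [NormedDivisionRing 𝕜] (w : ι → 𝕜) (c : κ → 𝕜)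
    (β : 𝕜) :
    ∑ pk : ι × κ, ‖β * (w pk.1 * c pk.2)‖ ^ 2
      = ‖β‖ ^ 2 * (∑ i, ‖w i‖ ^ 2) * ∑ k, ‖c k‖ ^ 2 := by
  rw [Fintype.sum_prod_type, mul_assoc, Finset.sum_mul_sum, Finset.mul_sum]
  refine Finset.sum_congr rfl fun i _ => ?_
  rw [Finset.mul_sum]
  refine Finset.sum_congr rfl fun k _ => ?_
  rw [norm_mul, norm_mul]
  ring

end Kronecker

theorem stmt_12_general (Mh Mv : ℕ)
    (ρvv ρvh : ℂ) (hρ : (ρvv, ρvh) ≠ (0, 0))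
    (R : Matrix (Fin 2 × (Fin Mh × Fin Mv)) (Fin 2 × (Fin Mh × Fin Mv)) ℂ)
    (hR : R ∈ Matrix.unitaryGroup (Fin 2 × (Fin Mh × Fin Mv)) ℂ)
    (c : Fin Mh × Fin Mv → ℂ) :
    let b : ℝ := (Real.sqrt (‖ρvv‖ ^ 2 + ‖ρvh‖ ^ 2))⁻¹
    let Vdual : Fin 2 × (Fin Mh × Fin Mv) → ℂ :=
      Rᴴ.mulVec (fun pk : Fin 2 × (Fin Mh × Fin Mv) =>
        (b : ℂ) * ((if pk.1 = 0 then (starRingEnd ℂ) ρvv else (starRingEnd ℂ) ρvh) * c pk.2))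
    (∀ ψaz ψel : ℝ,
      ‖((b : ℂ) * ∑ pk : Fin 2 × (Fin Mh × Fin Mv),
          (if pk.1 = 0 then ρvv else ρvh) *
            (starRingEnd ℂ) (arv Mh ψaz pk.2.1 * arv Mv ψel pk.2.2) * R.mulVec Vdual pk)‖ ^ 2
        = ‖(∑ k : Fin Mh × Fin Mv,
            (starRingEnd ℂ) (arv Mh ψaz k.1 * arv Mv ψel k.2) * c k)‖ ^ 2) ∧
    Real.sqrt (∑ pk : Fin 2 × (Fin Mh × Fin Mv), ‖(Vdual pk)‖ ^ 2)
      = Real.sqrt (∑ k : Fin Mh × Fin Mv, ‖(c k)‖ ^ 2) := by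
  intro b Vdual
  have hs : 0 < ‖ρvv‖ ^ 2 + ‖ρvh‖ ^ 2 := by
    rcases eq_or_ne ρvv 0 with rfl | h
    · have : ρvh ≠ 0 := by simpa using hρ
      positivity
    · positivity
  have hb : b ^ 2 * (‖ρvv‖ ^ 2 + ‖ρvh‖ ^ 2) = 1 := by
    rw [inv_pow, Real.sq_sqrt hs.le, inv_mul_cancel₀ hs.ne']
  set u : Fin 2 → ℂ := fun p => if p = 0 then ρvv else ρvh
  set w : Fin 2 → ℂ := fun p => if p = 0 then starRingEnd ℂ ρvv else starRingEnd ℂ ρvh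
  have huw : ∑ p, u p * w p = ((‖ρvv‖ ^ 2 + ‖ρvh‖ ^ 2 : ℝ) : ℂ) := by
    simp [u, w, Fin.sum_univ_two, Complex.mul_conj']
  have hw : ∑ p, ‖w p‖ ^ 2 = ‖ρvv‖ ^ 2 + ‖ρvh‖ ^ 2 := by
    simp [w, Fin.sum_univ_two]
  refine ⟨fun ψaz ψel => ?_, ?_⟩
  · rw [mulVec_conjTranspose_mulVec_of_mem_unitaryGroup hR, sum_kronecker_mul_kronecker u w
      (fun k : Fin Mh × Fin Mv => starRingEnd ℂ (arv Mh ψaz k.1 * arv Mv ψel k.2)), huw,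
      ← mul_assoc, ← mul_assoc, ← Complex.ofReal_mul, ← Complex.ofReal_mul, ← sq, hb,
      Complex.ofReal_one, one_mul]
  · rw [sum_norm_sq_conjTranspose_mulVec_of_mem_unitaryGroup hR, sum_norm_sq_kronecker w, hw,
      Complex.norm_real, Real.norm_of_nonneg (by positivity), hb, one_mul]

theorem stmt_12 (Mh Mv : ℕ) (hMh : 1 ≤ Mh) (hMv : 1 ≤ Mv)
    (ρvv ρvh : ℂ) (hρ : (ρvv, ρvh) ≠ (0, 0))
    (R : Matrix (Fin 2 × (Fin Mh × Fin Mv)) (Fin 2 × (Fin Mh × Fin Mv)) ℂ)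
    (hR : R ∈ Matrix.unitaryGroup (Fin 2 × (Fin Mh × Fin Mv)) ℂ)
    (c : Fin Mh × Fin Mv → ℂ) :
    let b : ℝ := (Real.sqrt (‖ρvv‖ ^ 2 + ‖ρvh‖ ^ 2))⁻¹
    let Vdual : Fin 2 × (Fin Mh × Fin Mv) → ℂ :=
      Rᴴ.mulVec (fun pk : Fin 2 × (Fin Mh × Fin Mv) =>
        (b : ℂ) * ((if pk.1 = 0 then (starRingEnd ℂ) ρvv else (starRingEnd ℂ) ρvh) * c pk.2))
    (∀ ψaz ψel : ℝ,
      ‖((b : ℂ) * ∑ pk : Fin 2 × (Fin Mh × Fin Mv),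
          (if pk.1 = 0 then ρvv else ρvh) *
            (starRingEnd ℂ) (arv Mh ψaz pk.2.1 * arv Mv ψel pk.2.2) * R.mulVec Vdual pk)‖ ^ 2
        = ‖(∑ k : Fin Mh × Fin Mv,
            (starRingEnd ℂ) (arv Mh ψaz k.1 * arv Mv ψel k.2) * c k)‖ ^ 2) ∧
    Real.sqrt (∑ pk : Fin 2 × (Fin Mh × Fin Mv), ‖(Vdual pk)‖ ^ 2)
      = Real.sqrt (∑ k : Fin Mh × Fin Mv, ‖(c k)‖ ^ 2) :=
  stmt_12_general Mh Mv ρvv ρvh hρ R hR c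
end

section
/- Let m_tx, m_rx ∈ ℕ, let P = [[ρ_vv, ρ_vh], [ρ_hv, ρ_hh]] ∈ ℂ^{2×2}, let u_rx ∈ ℂ^{m_rx}, u_tx ∈ ℂ^{m_tx}, let R ∈ ℂ^{2m_tx × 2m_tx} be unitary, let (ρ_vv, ρ_vh) ≠ (0,0), b = (|ρ_vv|² + |ρ_vh|²)^{−1/2}, and let c_s ∈ ℂ^{m_tx}. Set c_tx = b R^H ([ρ_vv*, ρ_vh*]ᵀ ⊗ c_s), ξ_v = |ρ_vv|² + |ρ_vh|², and ξ_h = ρ_vv ρ_hv* + ρ_vh ρ_hh*. Then for every c_rx ∈ ℂ^{2m_rx}: | c_rx^H ( P ⊗ (u_rx u_tx^H) ) R c_tx |² = b² · |u_tx^H c_s|² · | ([ξ_v, ξ_h] ⊗ u_rx^H) c_rx |². -/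
/-!
Since `R Rᴴ = 1`, the beamformer reduces to `(P ⊗ u_rx u_txᴴ) (b ρ̄_v ⊗ c_s)`, where `ρ̄_v` is the
conjugated first row of `P`. By the mixed-product rule this equals
`b (u_txᴴ c_s) · (P ρ̄_v ⊗ u_rx)`, and `P ρ̄_v = (ξ_v, ξ̄_h)`; pairing with `c_rx` and taking
absolute values gives the factorisation.
-/

open Complex Matrix
open scoped Kronecker

namespace Matrix

variable {α m n p q : Type*}

def kroneckerVec [Mul α] (x : m → α) (y : n → α) : m × n → α := fun i => x i.1 * y i.2

section CommSemiring

variable [CommSemiring α]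

theorem kronecker_mulVec_kroneckerVec [Fintype n] [Fintype q]
    (A : Matrix m n α) (B : Matrix p q α) (x : n → α) (y : q → α) :
    (A ⊗ₖ B) *ᵥ kroneckerVec x y = kroneckerVec (A *ᵥ x) (B *ᵥ y) := by
  ext ⟨i, k⟩
  simp only [kroneckerVec, mulVec, dotProduct, kroneckerMap_apply, Fintype.sum_prod_type,
    Finset.sum_mul_sum]
  exact Finset.sum_congr rfl fun _ _ => Finset.sum_congr rfl fun _ _ => by ring

theorem kroneckerVec_smul_right (x : m → α) (s : α) (y : n → α) :
    kroneckerVec x (s • y) = s • kroneckerVec x y := by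
  ext i
  simp only [kroneckerVec, Pi.smul_apply, smul_eq_mul]
  ring

theorem star_kroneckerVec [StarRing α] (x : m → α) (y : n → α) :
    star (kroneckerVec x y) = kroneckerVec (star x) (star y) := by
  ext i
  simp only [kroneckerVec, Pi.star_apply, star_mul']

theorem star_dotProduct_kronecker_vecMulVec_mulVec_kroneckerVec [StarRing α]
    [Fintype m] [Fintype n] [Fintype p] [Fintype q]
    (P : Matrix m n α) (u : p → α) (v c : q → α) (a : n → α) (x : m × p → α) :
    star x ⬝ᵥ ((P ⊗ₖ vecMulVec u (star v)) *ᵥ kroneckerVec a c)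
      = (star v ⬝ᵥ c) * star (kroneckerVec (star (P *ᵥ a)) (star u) ⬝ᵥ x) := by
  rw [kronecker_mulVec_kroneckerVec, vecMulVec_mulVec, op_smul_eq_smul, kroneckerVec_smul_right,
    dotProduct_smul, smul_eq_mul, ← star_kroneckerVec, ← star_dotProduct]

end CommSemiring

theorem mul_mulVec_conjTranspose_mulVec_of_mem_unitaryGroup [CommRing α] [StarRing α]
    [Fintype n] [DecidableEq n] (M : Matrix m n α) {R : Matrix n n α}
    (hR : R ∈ unitaryGroup n α) (w : n → α) :
    (M * R) *ᵥ (Rᴴ *ᵥ w) = M *ᵥ w := by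
  rw [mulVec_mulVec, Matrix.mul_assoc, ← star_eq_conjTranspose, mem_unitaryGroup_iff.mp hR,
    Matrix.mul_one]

end Matrix

theorem stmt_13_general (mtx mrx : ℕ) (ρvv ρvh ρhv ρhh : ℂ)
    (urx : Fin mrx → ℂ) (utx : Fin mtx → ℂ)
    (R : Matrix (Fin 2 × Fin mtx) (Fin 2 × Fin mtx) ℂ)
    (hR : R ∈ Matrix.unitaryGroup (Fin 2 × Fin mtx) ℂ)
    (cs : Fin mtx → ℂ) :
    let b : ℝ := (Real.sqrt (‖ρvv‖ ^ 2 + ‖ρvh‖ ^ 2))⁻¹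
    let P : Fin 2 → Fin 2 → ℂ := fun p q =>
      if p = 0 then (if q = 0 then ρvv else ρvh) else (if q = 0 then ρhv else ρhh)
    let ctx : Fin 2 × Fin mtx → ℂ :=
      Rᴴ.mulVec (fun qj : Fin 2 × Fin mtx =>
        (b : ℂ) * ((if qj.1 = 0 then (starRingEnd ℂ) ρvv else (starRingEnd ℂ) ρvh) * cs qj.2))
    let ξv : ℂ := ((‖ρvv‖ ^ 2 + ‖ρvh‖ ^ 2 : ℝ) : ℂ)
    let ξh : ℂ := ρvv * (starRingEnd ℂ) ρhv + ρvh * (starRingEnd ℂ) ρhh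
    let Hfull : Matrix (Fin 2 × Fin mrx) (Fin 2 × Fin mtx) ℂ :=
      Matrix.of (fun (pi : Fin 2 × Fin mrx) (qj : Fin 2 × Fin mtx) =>
        P pi.1 qj.1 * (urx pi.2 * (starRingEnd ℂ) (utx qj.2))) * R
    ∀ crx : Fin 2 × Fin mrx → ℂ,
      ‖(∑ pi : Fin 2 × Fin mrx, (starRingEnd ℂ) (crx pi) * Hfull.mulVec ctx pi)‖ ^ 2
        = b ^ 2 * ‖(∑ j : Fin mtx, (starRingEnd ℂ) (utx j) * cs j)‖ ^ 2 *
            ‖(∑ pi : Fin 2 × Fin mrx,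
              (if pi.1 = 0 then ξv else ξh) * (starRingEnd ℂ) (urx pi.2) * crx pi)‖ ^ 2 := by
  intro b P ctx ξv ξh Hfull crx
  set a : Fin 2 → ℂ := fun q => if q = 0 then (starRingEnd ℂ) ρvv else (starRingEnd ℂ) ρvh
  set ξ : Fin 2 → ℂ := fun p => if p = 0 then ξv else ξh
  have hξ : star (of P *ᵥ a) = ξ := by
    funext p
    simp only [mulVec, dotProduct, Fin.sum_univ_two, Pi.star_apply]
    fin_cases p
    · simp [P, a, ξ, ξv, mul_conj, normSq_eq_norm_sq]
    · simp [P, a, ξ, ξh, mul_comm]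
  have hgain : star crx ⬝ᵥ (Hfull *ᵥ ctx) = (b : ℂ) * ((star utx ⬝ᵥ cs) *
      star (kroneckerVec ξ (star urx) ⬝ᵥ crx)) := by
    change star crx ⬝ᵥ ((of P ⊗ₖ vecMulVec urx (star utx)) * R) *ᵥ
      (Rᴴ *ᵥ ((b : ℂ) • kroneckerVec a cs)) = _
    rw [mul_mulVec_conjTranspose_mulVec_of_mem_unitaryGroup _ hR, mulVec_smul, dotProduct_smul,
      star_dotProduct_kronecker_vecMulVec_mulVec_kroneckerVec, hξ, smul_eq_mul]
  have hb : 0 ≤ b := inv_nonneg.mpr (Real.sqrt_nonneg _)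
  change ‖star crx ⬝ᵥ (Hfull *ᵥ ctx)‖ ^ 2 = b ^ 2 * ‖star utx ⬝ᵥ cs‖ ^ 2 *
    ‖kroneckerVec ξ (star urx) ⬝ᵥ crx‖ ^ 2
  rw [hgain, norm_mul, norm_mul, norm_star, Complex.norm_real, Real.norm_of_nonneg hb]
  ring

theorem stmt_13 (mtx mrx : ℕ) (ρvv ρvh ρhv ρhh : ℂ) (hρ : (ρvv, ρvh) ≠ (0, 0))
    (urx : Fin mrx → ℂ) (utx : Fin mtx → ℂ)
    (R : Matrix (Fin 2 × Fin mtx) (Fin 2 × Fin mtx) ℂ)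
    (hR : R ∈ Matrix.unitaryGroup (Fin 2 × Fin mtx) ℂ)
    (cs : Fin mtx → ℂ) :
    let b : ℝ := (Real.sqrt (‖ρvv‖ ^ 2 + ‖ρvh‖ ^ 2))⁻¹
    let P : Fin 2 → Fin 2 → ℂ := fun p q =>
      if p = 0 then (if q = 0 then ρvv else ρvh) else (if q = 0 then ρhv else ρhh)
    let ctx : Fin 2 × Fin mtx → ℂ :=
      Rᴴ.mulVec (fun qj : Fin 2 × Fin mtx =>
        (b : ℂ) * ((if qj.1 = 0 then (starRingEnd ℂ) ρvv else (starRingEnd ℂ) ρvh) * cs qj.2))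
    let ξv : ℂ := ((‖ρvv‖ ^ 2 + ‖ρvh‖ ^ 2 : ℝ) : ℂ)
    let ξh : ℂ := ρvv * (starRingEnd ℂ) ρhv + ρvh * (starRingEnd ℂ) ρhh
    let Hfull : Matrix (Fin 2 × Fin mrx) (Fin 2 × Fin mtx) ℂ :=
      Matrix.of (fun (pi : Fin 2 × Fin mrx) (qj : Fin 2 × Fin mtx) =>
        P pi.1 qj.1 * (urx pi.2 * (starRingEnd ℂ) (utx qj.2))) * R
    ∀ crx : Fin 2 × Fin mrx → ℂ,
      ‖(∑ pi : Fin 2 × Fin mrx, (starRingEnd ℂ) (crx pi) * Hfull.mulVec ctx pi)‖ ^ 2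
        = b ^ 2 * ‖(∑ j : Fin mtx, (starRingEnd ℂ) (utx j) * cs j)‖ ^ 2 *
            ‖(∑ pi : Fin 2 × Fin mrx,
              (if pi.1 = 0 then ξv else ξh) * (starRingEnd ℂ) (urx pi.2) * crx pi)‖ ^ 2 :=
  stmt_13_general mtx mrx ρvv ρvh ρhv ρhh urx utx R hR cs
end
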